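/- arXiv:2410.23495 — 3 statements merged into one kernel-verified Lean document; each statement's English description precedes it below -/
import Mathlib

section
/- Suppose two models are trained by the greedy training process on the cumulative datasets T_{1:j₁} and T_{1:j₂} respectively, with j₁ > j₂, both starting from the same learned set L and with no memorized data. If u_{c,i} denotes the i-th feature of class c learned by the model trained on T_{1:j₁} and u'_{c,i} that of the model trained on T_{1:j₂} (with value NA when learning in class c has stopped), then for every class c and index i, either u_{c,i} = u'_{c,i} or u'_{c,i} = NA; i.e., the model with the smaller dataset learns a per-class prefix of the features learned by the model with the larger dataset. -/
open Finset

/-- Number of data points in `N` whose feature set contains the feature `v`. -/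
def featCount {F X : Type} [DecidableEq F] (feats : X → Finset F)
    (N : Finset X) (v : F) : ℕ :=
  (N.filter fun x => v ∈ feats x).card

/-- `g(v; T, N)`: the frequency of feature `v` among the data points of `N`,
normalized by the size of the full training set `T`. -/
noncomputable def gval {F X : Type} [DecidableEq F] (feats : X → Finset F)
    (T N : Finset X) (v : F) : ℝ :=
  (featCount feats N v : ℝ) / (T.card : ℝ)

/-- The set of data points of `T` with nonzero gradient: not memorized (not in
`M`) and not well-classified by the learned set `L` (fewer than `τ` of their
features are learned). -/
def active {F X : Type} [DecidableEq F] [DecidableEq X] (feats : X → Finset F) (τ : ℕ)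
    (L : Finset F) (M T : Finset X) : Finset X :=
  (T \ M).filter fun x => ((feats x) ∩ L).card < τ

/-- The learned set after the first `i` steps of a run `us` starting from `L0`. -/
def learnedAfter {F : Type} [DecidableEq F] (L0 : Finset F) (us : List F)
    (i : ℕ) : Finset F :=
  L0 ∪ (us.take i).toFinset

/-- `us` is a valid greedy training run on the dataset `T` with initially
memorized set `M`, starting from the learned set `L0`; `S` is the set of all
features, `τ` the well-classification threshold and `γ` the noise strength.
At every step the model picks a not-yet-learned feature of maximal frequency
`g` among the active (nonzero-gradient) data points; it is learned if its
frequency is at least `γ/|T|`, and at the end of the run every remaining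
unlearned feature has frequency below `γ/|T|` (the remaining active points are
then memorized). -/
structure IsRun {F X : Type} [DecidableEq F] [DecidableEq X] (S : Finset F)
    (feats : X → Finset F) (τ : ℕ) (γ : ℝ) (T M : Finset X)
    (L0 : Finset F) (us : List F) : Prop where
  mem : ∀ i (h : i < us.length), us.get ⟨i, h⟩ ∈ S \ learnedAfter L0 us i
  maximal : ∀ i (h : i < us.length), ∀ u ∈ S \ learnedAfter L0 us i,
    gval feats T (active feats τ (learnedAfter L0 us i) M T) u ≤
      gval feats T (active feats τ (learnedAfter L0 us i) M T) (us.get ⟨i, h⟩)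
  threshold : ∀ i (h : i < us.length),
    γ / (T.card : ℝ) ≤
      gval feats T (active feats τ (learnedAfter L0 us i) M T) (us.get ⟨i, h⟩)
  stopped : ∀ u ∈ S \ learnedAfter L0 us us.length,
    gval feats T (active feats τ (learnedAfter L0 us us.length) M T) u <
      γ / (T.card : ℝ)

/-- The memorized set after a run: the previously memorized points together
with all points that are still active (not well-classified) at the end of the
run. -/
def finalM {F X : Type} [DecidableEq F] [DecidableEq X] (feats : X → Finset F) (τ : ℕ)
    (T M : Finset X) (L0 : Finset F) (us : List F) : Finset X :=
  M ∪ active feats τ (L0 ∪ us.toFinset) M T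

/-- The cumulative dataset `T_{1:j}`, the union of the first `j` chunks. -/
def cumT {X : Type} [DecidableEq X] (chunk : ℕ → Finset X) (j : ℕ) : Finset X :=
  (Finset.Icc 1 j).biUnion chunk

/-- `h(v; L)`: the fraction of data points (of one chunk) containing `v` that
are not well-classified by the learned set `L`. -/
noncomputable def hval {F : Type} [DecidableEq F] (C : ℕ) (Sc : Fin C → Finset F)
    (nA : Fin C → Finset F → ℕ) (τ n : ℕ) (v : F) (L : Finset F) : ℝ :=
  (1 / (n : ℝ)) * ∑ c : Fin C, ∑ A ∈ (Sc c).powerset,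
    (nA c A : ℝ) * (if v ∈ A ∧ (A ∩ L).card < τ then 1 else 0)

/-- The test accuracy of a learned feature set `L`. -/
noncomputable def ACC {F : Type} [DecidableEq F] (C : ℕ) (Sc : Fin C → Finset F)
    (nA : Fin C → Finset F → ℕ) (τ n : ℕ) (L : Finset F) : ℝ :=
  1 - ((C : ℝ) - 1) / (C : ℝ) * ((1 / (n : ℝ)) *
    ∑ c : Fin C, ∑ A ∈ (Sc c).powerset,
      (nA c A : ℝ) * (if (A ∩ L).card < τ then 1 else 0))

/-! Both runs are greedy with respect to the same score `h`, since on a balanced expanding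
dataset `g(v; T_{1:j}, N) = h(v; L)`; only the threshold `γ / (j n)` depends on `j`, and it
is smaller for the larger dataset. Within a class `c`, `h(v; L)` for `v ∈ S_c` only depends
on `L ∩ S_c`, so as long as both runs have learned the same features of class `c` they
face the same choice there: by injectivity of `h` they pick the same next feature, and the
run with the higher threshold cannot continue in class `c` after the other one has stopped. -/

section GreedyRun

variable {F : Type} [DecidableEq F]

structure IsGreedyRun (S : Finset F) (score : F → Finset F → ℝ) (θ : ℝ) (L0 : Finset F)
    (us : List F) : Prop where
  mem : ∀ i (h : i < us.length), us[i] ∈ S \ learnedAfter L0 us i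
  maximal : ∀ i (h : i < us.length), ∀ u ∈ S \ learnedAfter L0 us i,
    score u (learnedAfter L0 us i) ≤ score us[i] (learnedAfter L0 us i)
  threshold : ∀ i (h : i < us.length), θ ≤ score us[i] (learnedAfter L0 us i)
  stopped : ∀ u ∈ S \ learnedAfter L0 us us.length,
    score u (learnedAfter L0 us us.length) < θ

theorem learnedAfter_inter (L0 s : Finset F) (us : List F) (i : ℕ) :
    learnedAfter L0 us i ∩ s = L0 ∩ s ∪ ((us.take i).filter (· ∈ s)).toFinset := by
  ext x
  simp only [learnedAfter, mem_inter, mem_union, List.mem_toFinset, List.mem_filter,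
    decide_eq_true_eq]
  tauto

theorem List.exists_take_filter_eq_take {α : Type*} (p : α → Bool) (l : List α) {m : ℕ}
    (hm : m < (l.filter p).length) :
    ∃ i, ∃ hi : i < l.length, l[i] = (l.filter p)[m] ∧
      (l.take i).filter p = (l.filter p).take m := by
  induction l generalizing m with
  | nil => simp at hm
  | cons a t ih =>
    by_cases hp : p a
    · cases m with
      | zero => exact ⟨0, by simp, by simp [hp], by simp⟩
      | succ m =>
        obtain ⟨i, hi, hget, htake⟩ := ih (m := m) (by simpa [List.filter_cons, hp] using hm)
        exact ⟨i + 1, by simpa using hi, by simpa [List.filter_cons, hp] using hget,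
          by simp [hp, htake]⟩
    · obtain ⟨i, hi, hget, htake⟩ := ih (m := m) (by simpa [List.filter_cons, hp] using hm)
      exact ⟨i + 1, by simpa using hi, by simpa [List.filter_cons, hp] using hget,
        by simp [hp, htake]⟩

theorem exists_learnedAfter_inter_eq (L0 s : Finset F) (us : List F) {m : ℕ}
    (hm : m < (us.filter (· ∈ s)).length) :
    ∃ i, ∃ hi : i < us.length, us[i] = (us.filter (· ∈ s))[m] ∧
      learnedAfter L0 us i ∩ s = L0 ∩ s ∪ ((us.filter (· ∈ s)).take m).toFinset := by
  obtain ⟨i, hi, hget, htake⟩ := List.exists_take_filter_eq_take _ us hm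
  exact ⟨i, hi, hget, by rw [learnedAfter_inter, htake]⟩

theorem mem_sdiff_of_inter_eq {S s L L' : Finset F} {u : F} (hL : L ∩ s = L' ∩ s)
    (hu : u ∈ s) (huL : u ∈ S \ L) : u ∈ S \ L' := by
  refine mem_sdiff.mpr ⟨(mem_sdiff.mp huL).1, fun hmem => (mem_sdiff.mp huL).2 ?_⟩
  exact (mem_inter.mp (hL ▸ mem_inter.mpr ⟨hmem, hu⟩ : u ∈ L ∩ s)).1

theorem getElem_filter_mem {s : Finset F} (us : List F) {m : ℕ}
    (hm : m < (us.filter (· ∈ s)).length) : (us.filter (· ∈ s))[m] ∈ s := by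
  simpa using (List.mem_filter.mp (List.getElem_mem hm)).2

namespace IsGreedyRun

variable {S s L0 : Finset F} {score : F → Finset F → ℝ} {θ θ' : ℝ} {us us' : List F}

theorem learnedAfter_subset (hrun : IsGreedyRun S score θ L0 us) (hL0 : L0 ⊆ S) (i : ℕ) :
    learnedAfter L0 us i ⊆ S := by
  intro x hx
  rcases mem_union.mp hx with hx | hx
  · exact hL0 hx
  · obtain ⟨k, hk, rfl⟩ :=
      List.mem_iff_getElem.mp (List.mem_of_mem_take (List.mem_toFinset.mp hx))
    exact (mem_sdiff.mp (hrun.mem k hk)).1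

theorem lt_length_filter_of_prefix (hrun : IsGreedyRun S score θ L0 us)
    (hrun' : IsGreedyRun S score θ' L0 us') (hθ : θ ≤ θ')
    (hloc : ∀ v ∈ s, ∀ L L', L ∩ s = L' ∩ s → score v L = score v L') {m : ℕ}
    (hm' : m < (us'.filter (· ∈ s)).length)
    (hpre : (us'.filter (· ∈ s)).take m <+: us.filter (· ∈ s)) :
    m < (us.filter (· ∈ s)).length := by
  by_contra! hle
  have hlen : ((us'.filter (· ∈ s)).take m).length = m := List.length_take_of_le hm'.le
  have hfull : (us'.filter (· ∈ s)).take m = us.filter (· ∈ s) := by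
    have := hpre.length_le
    exact hpre.eq_of_length (by omega)
  obtain ⟨i', hi', hget', hL'⟩ := exists_learnedAfter_inter_eq L0 s us' hm'
  set v := (us'.filter (· ∈ s))[m]
  have hvs : v ∈ s := getElem_filter_mem us' hm'
  have hend : learnedAfter L0 us us.length ∩ s = learnedAfter L0 us' i' ∩ s := by
    rw [learnedAfter_inter, List.take_length, hL', hfull]
  have hv : v ∈ S \ learnedAfter L0 us' i' := hget' ▸ hrun'.mem i' hi'
  have hstop := hrun.stopped v (mem_sdiff_of_inter_eq hend.symm hvs hv)
  have hthr := hget' ▸ hrun'.threshold i' hi'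
  rw [hloc v hvs _ _ hend] at hstop
  linarith

theorem getElem_filter_eq_of_take_eq (hrun : IsGreedyRun S score θ L0 us)
    (hrun' : IsGreedyRun S score θ' L0 us') (hL0 : L0 ⊆ S)
    (hloc : ∀ v ∈ s, ∀ L L', L ∩ s = L' ∩ s → score v L = score v L')
    (hinj : ∀ L ⊆ S, ∀ v₁ ∈ s, ∀ v₂ ∈ s, score v₁ L = score v₂ L → v₁ = v₂)
    {m : ℕ} (hm : m < (us.filter (· ∈ s)).length) (hm' : m < (us'.filter (· ∈ s)).length)
    (htake : (us'.filter (· ∈ s)).take m = (us.filter (· ∈ s)).take m) :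
    (us'.filter (· ∈ s))[m] = (us.filter (· ∈ s))[m] := by
  obtain ⟨i, hi, hget, hL⟩ := exists_learnedAfter_inter_eq L0 s us hm
  obtain ⟨i', hi', hget', hL'⟩ := exists_learnedAfter_inter_eq L0 s us' hm'
  set v := (us.filter (· ∈ s))[m]
  set v' := (us'.filter (· ∈ s))[m]
  have hvs : v ∈ s := getElem_filter_mem us hm
  have hvs' : v' ∈ s := getElem_filter_mem us' hm'
  have hsame : learnedAfter L0 us i ∩ s = learnedAfter L0 us' i' ∩ s := by
    rw [hL, hL', htake]
  have hv : v ∈ S \ learnedAfter L0 us i := hget ▸ hrun.mem i hi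
  have hv' : v' ∈ S \ learnedAfter L0 us' i' := hget' ▸ hrun'.mem i' hi'
  have hle : score v' (learnedAfter L0 us i) ≤ score v (learnedAfter L0 us i) :=
    hget ▸ hrun.maximal i hi v' (mem_sdiff_of_inter_eq hsame.symm hvs' hv')
  have hge : score v (learnedAfter L0 us i) ≤ score v' (learnedAfter L0 us i) := by
    rw [hloc v hvs _ _ hsame, hloc v' hvs' _ _ hsame]
    exact hget' ▸ hrun'.maximal i' hi' v (mem_sdiff_of_inter_eq hsame hvs hv)
  exact hinj _ (hrun.learnedAfter_subset hL0 i) v' hvs' v hvs (le_antisymm hle hge)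

theorem filter_prefix (hrun : IsGreedyRun S score θ L0 us)
    (hrun' : IsGreedyRun S score θ' L0 us') (hθ : θ ≤ θ') (hL0 : L0 ⊆ S)
    (hloc : ∀ v ∈ s, ∀ L L', L ∩ s = L' ∩ s → score v L = score v L')
    (hinj : ∀ L ⊆ S, ∀ v₁ ∈ s, ∀ v₂ ∈ s, score v₁ L = score v₂ L → v₁ = v₂) :
    us'.filter (· ∈ s) <+: us.filter (· ∈ s) := by
  suffices h : ∀ m, (us'.filter (· ∈ s)).take m <+: us.filter (· ∈ s) by
    simpa using h (us'.filter (· ∈ s)).length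
  intro m
  induction m with
  | zero => simp
  | succ m ih =>
    rcases le_or_gt (us'.filter (· ∈ s)).length m with hle | hm'
    · rwa [List.take_of_length_le (hle.trans m.le_succ), ← List.take_of_length_le hle]
    have hm := hrun.lt_length_filter_of_prefix hrun' hθ hloc hm' ih
    have htake : (us'.filter (· ∈ s)).take m = (us.filter (· ∈ s)).take m := by
      simpa [List.length_take_of_le hm'.le] using List.prefix_iff_eq_take.mp ih
    have hnext := hrun.getElem_filter_eq_of_take_eq hrun' hL0 hloc hinj hm hm' htake
    rw [List.take_add_one, htake, List.getElem?_eq_getElem hm', hnext,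
      ← List.getElem?_eq_getElem hm, ← List.take_add_one]
    exact List.take_prefix _ _

end IsGreedyRun

end GreedyRun

section BalancedDataset

variable {F X : Type} [DecidableEq F] {C : ℕ} {Sc : Fin C → Finset F} {label : X → Fin C}
  {feats : X → Finset F} {nA : Fin C → Finset F → ℕ} {chunk : ℕ → Finset X}

theorem sum_feats_eq_sum_card_nsmul {M : Type*} [AddCommMonoid M]
    (hfeats : ∀ x, feats x ⊆ Sc (label x)) (s : Finset X) (f : Finset F → M) :
    ∑ x ∈ s, f (feats x) = ∑ c, ∑ A ∈ (Sc c).powerset,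
      (s.filter fun x => label x = c ∧ feats x = A).card • f A := by
  rw [← sum_fiberwise_of_maps_to (fun x _ => mem_univ (label x)) (fun x => f (feats x))]
  refine sum_congr rfl fun c _ => ?_
  rw [← sum_fiberwise_of_maps_to (s := s.filter fun x => label x = c) (t := (Sc c).powerset)
    (g := feats) (fun x hx => mem_powerset.mpr ((mem_filter.mp hx).2 ▸ hfeats x))
    (fun x => f (feats x))]
  refine sum_congr rfl fun A _ => ?_
  rw [filter_filter, ← sum_const]
  exact sum_congr rfl fun x hx => by rw [(mem_filter.mp hx).2.2]

variable [DecidableEq X]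

theorem card_cumT {n : ℕ} (hchunkdisj : ∀ j j', j ≠ j' → Disjoint (chunk j) (chunk j'))
    (hchunkcard : ∀ j, 1 ≤ j → (chunk j).card = n) (j : ℕ) :
    (cumT chunk j).card = j * n := by
  rw [cumT, card_biUnion fun l _ l' _ hne => hchunkdisj l l' hne,
    sum_congr rfl fun l hl => hchunkcard l (mem_Icc.mp hl).1]
  simp

theorem card_filter_cumT (hchunkdisj : ∀ j j', j ≠ j' → Disjoint (chunk j) (chunk j'))
    (hcount : ∀ j, 1 ≤ j → ∀ c : Fin C, ∀ A ∈ (Sc c).powerset,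
      ((chunk j).filter fun x => label x = c ∧ feats x = A).card = nA c A)
    (j : ℕ) {c : Fin C} {A : Finset F} (hA : A ∈ (Sc c).powerset) :
    ((cumT chunk j).filter fun x => label x = c ∧ feats x = A).card = j * nA c A := by
  rw [cumT, filter_biUnion,
    card_biUnion fun l _ l' _ hne => disjoint_filter_filter (hchunkdisj l l' hne),
    sum_congr rfl fun l hl => hcount l (mem_Icc.mp hl).1 c A hA]
  simp

theorem gval_active_cumT_eq_hval {n : ℕ} (τ : ℕ) (hfeats : ∀ x, feats x ⊆ Sc (label x))
    (hchunkdisj : ∀ j j', j ≠ j' → Disjoint (chunk j) (chunk j'))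
    (hchunkcard : ∀ j, 1 ≤ j → (chunk j).card = n)
    (hcount : ∀ j, 1 ≤ j → ∀ c : Fin C, ∀ A ∈ (Sc c).powerset,
      ((chunk j).filter fun x => label x = c ∧ feats x = A).card = nA c A)
    {j : ℕ} (hj : 1 ≤ j) (L : Finset F) (v : F) :
    gval feats (cumT chunk j) (active feats τ L ∅ (cumT chunk j)) v = hval C Sc nA τ n v L := by
  have hcount_cumT : (featCount feats (active feats τ L ∅ (cumT chunk j)) v : ℝ) =
      j * ∑ c, ∑ A ∈ (Sc c).powerset,
        (nA c A : ℝ) * (if v ∈ A ∧ (A ∩ L).card < τ then 1 else 0) := by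
    rw [featCount, active, sdiff_empty, filter_filter, ← sum_boole,
      sum_feats_eq_sum_card_nsmul hfeats _
        fun A => if (A ∩ L).card < τ ∧ v ∈ A then (1 : ℝ) else 0,
      mul_sum]
    refine sum_congr rfl fun c _ => ?_
    rw [mul_sum]
    refine sum_congr rfl fun A hA => ?_
    rw [card_filter_cumT hchunkdisj hcount j hA, nsmul_eq_mul, Nat.cast_mul, mul_assoc]
    simp only [and_comm]
  rw [gval, hval, hcount_cumT, card_cumT hchunkdisj hchunkcard, Nat.cast_mul,
    mul_div_mul_left _ _ (by positivity), one_div_mul_eq_div]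

theorem hval_congr_of_inter_eq (τ n : ℕ)
    (hdisjS : ∀ c c', c ≠ c' → Disjoint (Sc c) (Sc c')) {c : Fin C} {v : F} (hv : v ∈ Sc c)
    {L L' : Finset F} (hL : L ∩ Sc c = L' ∩ Sc c) :
    hval C Sc nA τ n v L = hval C Sc nA τ n v L' := by
  unfold hval
  congr 1
  refine sum_congr rfl fun c' _ => sum_congr rfl fun A hA => ?_
  rw [mem_powerset] at hA
  by_cases hc : c' = c
  · subst hc
    rw [← inter_eq_left.mpr hA, inter_assoc, inter_comm (Sc c') L, hL,
      inter_comm L' (Sc c'), ← inter_assoc]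
  · have hvA : v ∉ A := fun hvA => disjoint_left.mp (hdisjS c' c hc) (hA hvA) hv
    simp [hvA]

theorem IsRun.isGreedyRun_hval {n τ : ℕ} {γ : ℝ} {S L0 : Finset F} {us : List F}
    (hfeats : ∀ x, feats x ⊆ Sc (label x))
    (hchunkdisj : ∀ j j', j ≠ j' → Disjoint (chunk j) (chunk j'))
    (hchunkcard : ∀ j, 1 ≤ j → (chunk j).card = n)
    (hcount : ∀ j, 1 ≤ j → ∀ c : Fin C, ∀ A ∈ (Sc c).powerset,
      ((chunk j).filter fun x => label x = c ∧ feats x = A).card = nA c A)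
    {j : ℕ} (hj : 1 ≤ j) (hrun : IsRun S feats τ γ (cumT chunk j) ∅ L0 us) :
    IsGreedyRun S (hval C Sc nA τ n) (γ / (j * n : ℕ)) L0 us := by
  have hg := gval_active_cumT_eq_hval τ hfeats hchunkdisj hchunkcard hcount hj
  have hT := card_cumT hchunkdisj hchunkcard j
  exact ⟨hrun.mem, by simpa only [hg, List.get_eq_getElem] using hrun.maximal,
    by simpa only [hg, hT, List.get_eq_getElem] using hrun.threshold,
    by simpa only [hg, hT] using hrun.stopped⟩

end BalancedDataset

theorem smaller_dataset_learns_prefix_general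
    {F X : Type} [DecidableEq F] [DecidableEq X]
    (C τ : ℕ) (γ : ℝ) (n : ℕ)
    (Sc : Fin C → Finset F) (label : X → Fin C) (feats : X → Finset F)
    (nA : Fin C → Finset F → ℕ) (chunk : ℕ → Finset X)
    (hγ : 0 < γ)
    (hdisjS : ∀ c c', c ≠ c' → Disjoint (Sc c) (Sc c'))
    (hfeats : ∀ x, feats x ⊆ Sc (label x))
    (hnA : ∀ c, ∀ A ∈ (Sc c).powerset, 1 ≤ nA c A)
    (hn : n = ∑ c : Fin C, ∑ A ∈ (Sc c).powerset, nA c A)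
    (hchunkdisj : ∀ j j', j ≠ j' → Disjoint (chunk j) (chunk j'))
    (hchunkcard : ∀ j, 1 ≤ j → (chunk j).card = n)
    (hcount : ∀ j, 1 ≤ j → ∀ c : Fin C, ∀ A ∈ (Sc c).powerset,
      ((chunk j).filter fun x => label x = c ∧ feats x = A).card = nA c A)
    (hinj : ∀ L : Finset F, L ⊆ Finset.univ.biUnion Sc →
      ∀ c : Fin C, ∀ v₁ ∈ Sc c, ∀ v₂ ∈ Sc c,
        hval C Sc nA τ n v₁ L = hval C Sc nA τ n v₂ L → v₁ = v₂)
    (j₁ j₂ : ℕ) (hj₂ : 1 ≤ j₂) (hj : j₂ < j₁)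
    (L0 : Finset F) (hL0 : L0 ⊆ Finset.univ.biUnion Sc)
    (us us' : List F)
    (hrun : IsRun (Finset.univ.biUnion Sc) feats τ γ (cumT chunk j₁) ∅ L0 us)
    (hrun' : IsRun (Finset.univ.biUnion Sc) feats τ γ (cumT chunk j₂) ∅ L0 us') :
    ∀ (c : Fin C) (i : ℕ),
      (us.filter fun v => decide (v ∈ Sc c))[i]? =
        (us'.filter fun v => decide (v ∈ Sc c))[i]? ∨
      (us'.filter fun v => decide (v ∈ Sc c))[i]? = none := by
  intro c i
  have hn_pos : 0 < n := hn ▸ calc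
    0 < nA c ∅ := hnA c ∅ (empty_mem_powerset _)
    _ ≤ ∑ A ∈ (Sc c).powerset, nA c A := single_le_sum (by simp) (empty_mem_powerset _)
    _ ≤ _ := single_le_sum (f := fun c => ∑ A ∈ (Sc c).powerset, nA c A) (by simp)
      (mem_univ c)
  have hθ : γ / (j₁ * n : ℕ) ≤ γ / (j₂ * n : ℕ) :=
    div_le_div_of_nonneg_left hγ.le (by positivity) (by gcongr)
  have hgreedy := hrun.isGreedyRun_hval hfeats hchunkdisj hchunkcard hcount (hj₂.trans hj.le)
  have hgreedy' := hrun'.isGreedyRun_hval hfeats hchunkdisj hchunkcard hcount hj₂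
  have hpre := hgreedy.filter_prefix hgreedy' hθ hL0
    (fun _ hv _ _ => hval_congr_of_inter_eq τ n hdisjS hv) (fun L hL => hinj L hL c)
  rcases lt_or_ge i (us'.filter fun v => decide (v ∈ Sc c)).length with hi | hi
  · exact Or.inl (by rw [List.prefix_iff_getElem?.mp hpre i hi, List.getElem?_eq_getElem hi])
  · exact Or.inr (List.getElem?_eq_none hi)

/-- Lemma: with a smaller dataset one learns a per-class
prefix. If one model is trained on `T_{1:j₁}` and another on `T_{1:j₂}` with
`j₁ > j₂`, both starting from the same learned set `L0` with no memorized data,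
then for every class `c` and index `i`, the `i`-th feature of class `c` learned
by the second model is either equal to that learned by the first model or is
`NA` (i.e. `none`). -/
theorem smaller_dataset_learns_prefix
    {F X : Type} [DecidableEq F] [DecidableEq X]
    (C K τ : ℕ) (γ : ℝ) (n : ℕ)
    (Sc : Fin C → Finset F) (label : X → Fin C) (feats : X → Finset F)
    (nA : Fin C → Finset F → ℕ) (chunk : ℕ → Finset X)
    (hγ : 0 < γ) (hτK : τ < K)
    (hK : ∀ c, (Sc c).card = K)
    (hdisjS : ∀ c c', c ≠ c' → Disjoint (Sc c) (Sc c'))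
    (hfeats : ∀ x, feats x ⊆ Sc (label x))
    (hnA : ∀ c, ∀ A ∈ (Sc c).powerset, 1 ≤ nA c A)
    (hn : n = ∑ c : Fin C, ∑ A ∈ (Sc c).powerset, nA c A)
    (hchunkdisj : ∀ j j', j ≠ j' → Disjoint (chunk j) (chunk j'))
    (hchunkcard : ∀ j, 1 ≤ j → (chunk j).card = n)
    (hcount : ∀ j, 1 ≤ j → ∀ c : Fin C, ∀ A ∈ (Sc c).powerset,
      ((chunk j).filter fun x => label x = c ∧ feats x = A).card = nA c A)
    (hinj : ∀ L : Finset F, L ⊆ Finset.univ.biUnion Sc →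
      ∀ c : Fin C, ∀ v₁ ∈ Sc c, ∀ v₂ ∈ Sc c,
        hval C Sc nA τ n v₁ L = hval C Sc nA τ n v₂ L → v₁ = v₂)
    (j₁ j₂ : ℕ) (hj₂ : 1 ≤ j₂) (hj : j₂ < j₁)
    (L0 : Finset F) (hL0 : L0 ⊆ Finset.univ.biUnion Sc)
    (us us' : List F)
    (hrun : IsRun (Finset.univ.biUnion Sc) feats τ γ (cumT chunk j₁) ∅ L0 us)
    (hrun' : IsRun (Finset.univ.biUnion Sc) feats τ γ (cumT chunk j₂) ∅ L0 us') :
    ∀ (c : Fin C) (i : ℕ),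
      (us.filter fun v => decide (v ∈ Sc c))[i]? =
        (us'.filter fun v => decide (v ∈ Sc c))[i]? ∨
      (us'.filter fun v => decide (v ∈ Sc c))[i]? = none :=
  smaller_dataset_learns_prefix_general C τ γ n Sc label feats nA chunk hγ hdisjS hfeats hnA hn
    hchunkdisj hchunkcard hcount hinj j₁ j₂ hj₂ hj L0 hL0 us us' hrun hrun'
end

section
/- At the start of every experiment J ≥ 2 under warm-starting, the signal strength of every unlearned feature is unchanged from the end of the first experiment: for all v ∈ S ∖ G, |T_{1:J}| · g(v; T_{1:J}, N_warm^(J,0)) = n · h(v; G), where G is the learned set at the end of the first experiment; consequently this signal strength is strictly below γ for every v ∈ S ∖ G. -/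
open Finset

lemma count_eq {F X : Type} [DecidableEq F] [DecidableEq X] {C : ℕ}
    (Sc : Fin C → Finset F) (label : X → Fin C) (feats : X → Finset F)
    (nA : Fin C → Finset F → ℕ) (T : Finset X)
    (hfeats : ∀ x, feats x ⊆ Sc (label x))
    (hcount : ∀ c : Fin C, ∀ A ∈ (Sc c).powerset,
      (T.filter fun x => label x = c ∧ feats x = A).card = nA c A)
    (P : Finset F → Prop) [DecidablePred P] :
    (T.filter fun x => P (feats x)).card
      = ∑ c : Fin C, ∑ A ∈ (Sc c).powerset, if P A then nA c A else 0 := by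
  classical
  have h1 : ∀ c : Fin C, ∀ A ∈ (Sc c).powerset,
      (if P A then nA c A else 0)
        = (T.filter fun x => label x = c ∧ feats x = A ∧ P (feats x)).card := by
    intro c A hA
    by_cases hP : P A
    · rw [if_pos hP, ← hcount c A hA]
      congr 1
      apply Finset.filter_congr
      intro x _
      constructor
      · rintro ⟨ha, hb⟩; exact ⟨ha, hb, hb ▸ hP⟩
      · rintro ⟨ha, hb, _⟩; exact ⟨ha, hb⟩
    · rw [if_neg hP]
      symm
      rw [Finset.card_eq_zero, Finset.filter_eq_empty_iff]
      rintro x _ ⟨_, h2, h3⟩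
      exact hP (h2 ▸ h3)
  rw [Finset.sum_congr rfl fun c _ => Finset.sum_congr rfl (h1 c)]
  simp only [Finset.card_filter]
  rw [Finset.sum_congr rfl fun c (_ : c ∈ Finset.univ) => Finset.sum_comm, Finset.sum_comm]
  apply Finset.sum_congr rfl
  intro x _
  rw [Fintype.sum_eq_single (label x) (fun c hc => Finset.sum_eq_zero fun A _ => by
    rw [if_neg]; rintro ⟨h, _⟩; exact hc h.symm)]
  rw [Finset.sum_eq_single_of_mem (feats x) (Finset.mem_powerset.2 (hfeats x))
    (fun A _ hne => by rw [if_neg]; rintro ⟨_, h2, _⟩; exact hne h2.symm)]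
  simp

lemma cumT_one {X : Type} [DecidableEq X] (chunk : ℕ → Finset X) :
    cumT chunk 1 = chunk 1 := by
  simp [cumT]

lemma cumT_succ {X : Type} [DecidableEq X] (chunk : ℕ → Finset X) (j : ℕ) :
    cumT chunk (j + 1) = cumT chunk j ∪ chunk (j + 1) := by
  ext x
  simp only [cumT, Finset.mem_biUnion, Finset.mem_Icc, Finset.mem_union]
  constructor
  · rintro ⟨l, ⟨h1, h2⟩, hx⟩
    rcases Nat.lt_or_ge l (j + 1) with h | h
    · exact Or.inl ⟨l, ⟨h1, by omega⟩, hx⟩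
    · have hl : l = j + 1 := by omega
      subst hl
      exact Or.inr hx
  · rintro (⟨l, ⟨h1, h2⟩, hx⟩ | hx)
    · exact ⟨l, ⟨h1, by omega⟩, hx⟩
    · exact ⟨j + 1, ⟨by omega, le_refl _⟩, hx⟩

lemma mem_cumT {X : Type} [DecidableEq X] {chunk : ℕ → Finset X} {j : ℕ} {x : X} :
    x ∈ cumT chunk j ↔ ∃ l, 1 ≤ l ∧ l ≤ j ∧ x ∈ chunk l := by
  simp [cumT, Finset.mem_biUnion, Finset.mem_Icc]
  tauto

/-- at the start of every experiment `J ≥ 2` under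
warm-starting, for every unlearned feature `v ∈ S ∖ G` (where `G = L_warm^(1)`)
the signal strength is unchanged from the end of the first experiment:
`|T_{1:J}| · g(v; T_{1:J}, N_warm^(J,0)) = n · h(v; G)`, and this quantity is
strictly below `γ`. -/
theorem warm_signal_strength_unchanged
    {F X : Type} [DecidableEq F] [DecidableEq X]
    (C K τ : ℕ) (γ : ℝ) (n : ℕ)
    (Sc : Fin C → Finset F) (label : X → Fin C) (feats : X → Finset F)
    (nA : Fin C → Finset F → ℕ) (chunk : ℕ → Finset X)
    (hγ : 0 < γ) (hτK : τ < K)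
    (hK : ∀ c, (Sc c).card = K)
    (hdisjS : ∀ c c', c ≠ c' → Disjoint (Sc c) (Sc c'))
    (hfeats : ∀ x, feats x ⊆ Sc (label x))
    (hnA : ∀ c, ∀ A ∈ (Sc c).powerset, 1 ≤ nA c A)
    (hn : n = ∑ c : Fin C, ∑ A ∈ (Sc c).powerset, nA c A)
    (hchunkdisj : ∀ j j', j ≠ j' → Disjoint (chunk j) (chunk j'))
    (hchunkcard : ∀ j, 1 ≤ j → (chunk j).card = n)
    (hcount : ∀ j, 1 ≤ j → ∀ c : Fin C, ∀ A ∈ (Sc c).powerset,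
      ((chunk j).filter fun x => label x = c ∧ feats x = A).card = nA c A)
    (hC : 0 < C) (hτpos : 0 < τ)
    (hinj : ∀ L : Finset F, L ⊆ Finset.univ.biUnion Sc →
      ∀ c : Fin C, ∀ v₁ ∈ Sc c, ∀ v₂ ∈ Sc c,
        hval C Sc nA τ n v₁ L = hval C Sc nA τ n v₂ L → v₁ = v₂)
    (hii : ∀ c : Fin C, ∃ v : Fin τ → F, Function.Injective v ∧ (∀ i, v i ∈ Sc c) ∧
      ∀ j, 1 ≤ j →
        ((∀ i : Fin τ, (i : ℕ) + 1 < τ →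
            γ / (n : ℝ) ≤ gval feats (chunk j) (chunk j) (v i)) ∧
          gval feats (chunk j) (chunk j)
            (v ⟨τ - 1, Nat.sub_lt hτpos Nat.one_pos⟩) < γ / (n : ℝ)))
    (Lw : ℕ → Finset F) (Mw : ℕ → Finset X) (usw : ℕ → List F)
    (hLw0 : Lw 0 = ∅) (hMw0 : Mw 0 = ∅)
    (hwarm : ∀ j : ℕ,
      IsRun (Finset.univ.biUnion Sc) feats τ γ (cumT chunk (j + 1)) (Mw j) (Lw j)
        (usw (j + 1)) ∧
      Lw (j + 1) = Lw j ∪ (usw (j + 1)).toFinset ∧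
      Mw (j + 1) = finalM feats τ (cumT chunk (j + 1)) (Mw j) (Lw j) (usw (j + 1)))
 :
    ∀ J : ℕ, 2 ≤ J → ∀ v ∈ Finset.univ.biUnion Sc \ Lw 1,
      ((cumT chunk J).card : ℝ) *
          gval feats (cumT chunk J)
            (active feats τ (Lw (J - 1)) (Mw (J - 1)) (cumT chunk J)) v =
        (n : ℝ) * hval C Sc nA τ n v (Lw 1) ∧
      (n : ℝ) * hval C Sc nA τ n v (Lw 1) < γ := by
  classical
  have hn0 : 0 < n := by
    rw [hn]
    calc 0 < nA ⟨0, hC⟩ ∅ := hnA _ _ (Finset.empty_mem_powerset _)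
      _ ≤ ∑ A ∈ (Sc ⟨0, hC⟩).powerset, nA ⟨0, hC⟩ A :=
        Finset.single_le_sum (fun _ _ => Nat.zero_le _) (Finset.empty_mem_powerset _)
      _ ≤ ∑ c : Fin C, ∑ A ∈ (Sc c).powerset, nA c A :=
        Finset.single_le_sum (f := fun c : Fin C => ∑ A ∈ (Sc c).powerset, nA c A)
          (fun _ _ => Nat.zero_le _) (Finset.mem_univ _)
  have hnR : (0 : ℝ) < (n : ℝ) := by exact_mod_cast hn0
  -- the invariant count
  have hchunkcount : ∀ j, 1 ≤ j → ∀ v : F,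
      featCount feats ((chunk j).filter fun x => ((feats x) ∩ Lw 1).card < τ) v
        = ∑ c : Fin C, ∑ A ∈ (Sc c).powerset,
            if v ∈ A ∧ (A ∩ Lw 1).card < τ then nA c A else 0 := by
    intro j hj v
    unfold featCount
    rw [Finset.filter_filter]
    have hcg : ((chunk j).filter fun x => ((feats x) ∩ Lw 1).card < τ ∧ v ∈ feats x)
        = (chunk j).filter fun x =>
            (fun A : Finset F => v ∈ A ∧ (A ∩ Lw 1).card < τ) (feats x) := by
      apply Finset.filter_congr
      intro x _
      exact and_comm
    rw [hcg]
    exact count_eq Sc label feats nA (chunk j) hfeats (hcount j hj)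
      (fun A => v ∈ A ∧ (A ∩ Lw 1).card < τ)
  -- positivity of cumulative dataset size
  have hTcard : ∀ J, 1 ≤ J → 0 < (cumT chunk J).card := by
    intro J hJ
    have hne : (chunk 1).Nonempty := by
      rw [← Finset.card_pos, hchunkcard 1 le_rfl]; exact hn0
    obtain ⟨x, hx⟩ := hne
    exact Finset.card_pos.2 ⟨x, mem_cumT.2 ⟨1, le_rfl, hJ, hx⟩⟩
  -- stopped condition of the first run
  have hstop : ∀ v ∈ Finset.univ.biUnion Sc \ Lw 1,
      ((∑ c : Fin C, ∑ A ∈ (Sc c).powerset,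
          if v ∈ A ∧ (A ∩ Lw 1).card < τ then nA c A else 0 : ℕ) : ℝ) < γ := by
    intro v hv
    obtain ⟨run1, hL1, hM1⟩ := hwarm 0
    simp only [Nat.zero_add] at run1 hL1 hM1
    have hlen : learnedAfter (Lw 0) (usw 1) (usw 1).length = Lw 1 := by
      rw [hL1, hLw0, learnedAfter, List.take_length]
    have hst := run1.stopped v (by rw [hlen]; exact hv)
    rw [hlen, hMw0, cumT_one] at hst
    have hact1 : active feats τ (Lw 1) ∅ (chunk 1)
        = (chunk 1).filter fun x => ((feats x) ∩ Lw 1).card < τ := by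
      simp [active]
    rw [hact1] at hst
    unfold gval at hst
    rw [hchunkcount 1 le_rfl v, hchunkcard 1 le_rfl] at hst
    exact (div_lt_div_iff_of_pos_right hnR).1 hst
  -- the active set at the start of each later experiment
  have hactgen : ∀ j,
      Mw j = (cumT chunk j).filter (fun x => ((feats x) ∩ Lw 1).card < τ) →
      active feats τ (Lw 1) (Mw j) (cumT chunk (j + 1))
        = (chunk (j + 1)).filter fun x => ((feats x) ∩ Lw 1).card < τ := by
    intro j hMj
    have hdisj : ∀ x ∈ chunk (j + 1), x ∉ cumT chunk j := by
      intro x hx hmem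
      obtain ⟨l, hl1, hl2, hxl⟩ := mem_cumT.1 hmem
      exact Finset.disjoint_left.1 (hchunkdisj l (j + 1) (by omega)) hxl hx
    ext x
    simp only [active, hMj, Finset.mem_filter, Finset.mem_sdiff, cumT_succ,
      Finset.mem_union]
    constructor
    · rintro ⟨⟨hmem, hnot⟩, hbadx⟩
      rcases hmem with hmem | hmem
      · exact absurd ⟨hmem, hbadx⟩ hnot
      · exact ⟨hmem, hbadx⟩
    · rintro ⟨hmem, hbadx⟩
      exact ⟨⟨Or.inr hmem, fun hmemf => hdisj x hmem hmemf.1⟩, hbadx⟩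
  -- the warm-start invariant
  have hinv : ∀ j, 1 ≤ j → Lw j = Lw 1 ∧
      Mw j = (cumT chunk j).filter (fun x => ((feats x) ∩ Lw 1).card < τ) := by
    intro j hj
    induction j, hj using Nat.le_induction with
    | base =>
      refine ⟨rfl, ?_⟩
      obtain ⟨run1, hL1, hM1⟩ := hwarm 0
      simp only [Nat.zero_add] at run1 hL1 hM1
      rw [hM1, finalM, hMw0, hLw0, cumT_one]
      have : (∅ : Finset F) ∪ (usw 1).toFinset = Lw 1 := by
        rw [hL1, hLw0]
      rw [this]
      simp [active]
    | succ j hj ih =>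
      obtain ⟨hLj, hMj⟩ := ih
      obtain ⟨run, hLs, hMs⟩ := hwarm j
      have husnil : usw (j + 1) = [] := by
        by_contra hne
        have hlen0 : 0 < (usw (j + 1)).length := List.length_pos_iff.2 hne
        have hla : learnedAfter (Lw j) (usw (j + 1)) 0 = Lw 1 := by
          simp [learnedAfter, hLj]
        have hmem0 := run.mem 0 hlen0
        rw [hla] at hmem0
        have hth := run.threshold 0 hlen0
        rw [hla, hactgen j hMj] at hth
        unfold gval at hth
        rw [hchunkcount (j + 1) (by omega)] at hth
        have hTpos : (0 : ℝ) < ((cumT chunk (j + 1)).card : ℝ) := by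
          exact_mod_cast hTcard (j + 1) (by omega)
        exact absurd ((div_le_div_iff_of_pos_right hTpos).1 hth)
          (not_le.2 (hstop _ hmem0))
      constructor
      · rw [hLs, husnil]; simp [hLj]
      · rw [hMs, finalM, husnil]
        have h1 : Lw j ∪ ([] : List F).toFinset = Lw 1 := by simp [hLj]
        rw [h1, hactgen j hMj, hMj, cumT_succ, Finset.filter_union]
  -- conclusion
  intro J hJ v hv
  obtain ⟨j, rfl⟩ : ∃ j, J = j + 1 := ⟨J - 1, by omega⟩
  have hj1 : 1 ≤ j := by omega
  obtain ⟨hLj, hMj⟩ := hinv j hj1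
  have hnh : (n : ℝ) * hval C Sc nA τ n v (Lw 1)
      = ((∑ c : Fin C, ∑ A ∈ (Sc c).powerset,
          if v ∈ A ∧ (A ∩ Lw 1).card < τ then nA c A else 0 : ℕ) : ℝ) := by
    unfold hval
    rw [← mul_assoc, mul_one_div_cancel (ne_of_gt hnR), one_mul]
    rw [Nat.cast_sum]
    apply Finset.sum_congr rfl
    intro c _
    rw [Nat.cast_sum]
    apply Finset.sum_congr rfl
    intro A _
    split_ifs <;> simp
  have hTposR : ((cumT chunk (j + 1)).card : ℝ) ≠ 0 := by
    have := hTcard (j + 1) (by omega)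
    positivity
  have hgv : ((cumT chunk (j + 1)).card : ℝ) *
      gval feats (cumT chunk (j + 1))
        (active feats τ (Lw (j + 1 - 1)) (Mw (j + 1 - 1)) (cumT chunk (j + 1))) v
      = ((∑ c : Fin C, ∑ A ∈ (Sc c).powerset,
          if v ∈ A ∧ (A ∩ Lw 1).card < τ then nA c A else 0 : ℕ) : ℝ) := by
    simp only [Nat.add_sub_cancel]
    rw [hLj, hactgen j hMj]
    unfold gval
    rw [hchunkcount (j + 1) (by omega) v, mul_comm, div_mul_cancel₀ _ hTposR]
  exact ⟨by rw [hgv, hnh], by rw [hnh]; exact hstop v hv⟩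
end

section
/- For every J ≥ 2, the test accuracy of the warm-started model is at most that of the cold-started model: ACC(L_warm^(J)) ≤ ACC(L_cold^(J)). -/
open Finset

/-!
Within a class `c` the score `h(v; L)` of a feature `v ∈ S_c` depends only on `L ∩ S_c` and is
injective in `v`, so every greedy run learns the features of `S_c` in one and the same order.
The first warm-started experiment stops once every remaining feature has `h < γ/n`; the `J`-th
cold-started one only once every remaining feature has `h < γ/(Jn) ≤ γ/n`. Along each class's
order the cold run therefore gets at least as far: `L_warm^(1) ⊆ L_cold^(J)`. Afterwards the
warm run learns nothing more: its non-memorized, not well-classified points all lie in the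
newest chunk, so every score is `h/(j+1) < γ/((j+1)n)`. Finally `ACC` is monotone in `L`.
-/

section Greedy

variable {F : Type} [DecidableEq F]

def IsGreedyRun_s6 (S : Finset F) (φ : Finset F → F → ℝ) (α : ℝ) : Finset F → List F → Prop
  | _, [] => True
  | L, u :: us => u ∈ S \ L ∧ (∀ v ∈ S \ L, φ L v ≤ φ L u) ∧ α ≤ φ L u ∧
      IsGreedyRun_s6 S φ α (insert u L) us

theorem IsGreedyRun_s6.toFinset_subset {S : Finset F} {φ : Finset F → F → ℝ} {α : ℝ} :
    ∀ {L : Finset F} {us : List F}, IsGreedyRun_s6 S φ α L us → us.toFinset ⊆ S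
  | _, [], _ => by simp
  | _, _ :: _, ⟨hu, _, _, hrun⟩ => by
    rw [List.toFinset_cons]
    exact insert_subset (mem_sdiff.1 hu).1 hrun.toFinset_subset

variable (s : Finset F) (φ : Finset F → F → ℝ)

/-- Adds to `Q` a feature of `s \ Q` maximizing `φ Q`. When `φ Q` is injective on `s` that
feature is unique, so every greedy run learns the features of `s` along `greedyChain s φ`. -/
noncomputable def greedyStep (Q : Finset F) : Finset F :=
  if h : (s \ Q).Nonempty then insert ((s \ Q).exists_max_image (φ Q) h).choose Q else Q

noncomputable def greedyChain (k : ℕ) : Finset F := (greedyStep s φ)^[k] ∅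

theorem greedyChain_succ (k : ℕ) :
    greedyChain s φ (k + 1) = greedyStep s φ (greedyChain s φ k) :=
  Function.iterate_succ_apply' _ _ _

theorem greedyChain_subset (k : ℕ) : greedyChain s φ k ⊆ s := by
  induction k with
  | zero => exact empty_subset s
  | succ k ih =>
    rw [greedyChain_succ, greedyStep]
    split_ifs with h
    · exact insert_subset (mem_sdiff.1 ((s \ _).exists_max_image (φ _) h).choose_spec.1).1 ih
    · exact ih

theorem greedyChain_mono : Monotone (greedyChain s φ) := by
  refine monotone_nat_of_le_succ fun k => ?_
  rw [greedyChain_succ, greedyStep]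
  split_ifs
  exacts [subset_insert _ _, le_rfl]

variable {s φ}

theorem greedyStep_eq_insert {Q : Finset F} {u : F} (hinj : Set.InjOn (φ Q) s)
    (hu : u ∈ s \ Q) (hmax : ∀ v ∈ s \ Q, φ Q v ≤ φ Q u) :
    greedyStep s φ Q = insert u Q := by
  have hne : (s \ Q).Nonempty := ⟨u, hu⟩
  obtain ⟨hw, hwmax⟩ := ((s \ Q).exists_max_image (φ Q) hne).choose_spec
  rw [greedyStep, dif_pos hne,
    hinj (mem_sdiff.1 hw).1 (mem_sdiff.1 hu).1 (le_antisymm (hmax _ hw) (hwmax u hu))]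

variable {S : Finset F} {α : ℝ}

theorem IsGreedyRun_s6.exists_inter_eq_greedyChain (hs : s ⊆ S)
    (hloc : ∀ L, ∀ v ∈ s, φ L v = φ (L ∩ s) v) (hinj : ∀ Q ⊆ s, Set.InjOn (φ Q) s) :
    ∀ {L : Finset F} {us : List F} {k : ℕ}, IsGreedyRun_s6 S φ α L us →
      L ∩ s = greedyChain s φ k →
      ∃ a, k ≤ a ∧ (L ∪ us.toFinset) ∩ s = greedyChain s φ a ∧
        ∀ i ∈ Ico k a, ∃ u ∈ s \ greedyChain s φ i, α ≤ φ (greedyChain s φ i) u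
  | L, [], k, _, hk => ⟨k, le_rfl, by simpa using hk, by simp⟩
  | L, u :: us, k, ⟨huS, hmax, hα, hrun⟩, hk => by
    rw [List.toFinset_cons, union_insert, ← insert_union]
    by_cases hu : u ∈ s
    · have hu' : u ∈ s \ greedyChain s φ k := by
        simpa [← hk, hu] using (mem_sdiff.1 huS).2
      have hstep : insert u L ∩ s = greedyChain s φ (k + 1) := by
        rw [greedyChain_succ, insert_inter_of_mem hu, hk,
          greedyStep_eq_insert (hinj _ (greedyChain_subset s φ k)) hu']
        intro v hv
        rw [← hk, ← hloc L v (mem_sdiff.1 hv).1, ← hloc L u hu]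
        refine hmax v (mem_sdiff.2 ⟨hs (mem_sdiff.1 hv).1, fun hvL => ?_⟩)
        exact (mem_sdiff.1 hv).2 (hk ▸ mem_inter.2 ⟨hvL, (mem_sdiff.1 hv).1⟩)
      obtain ⟨a, hka, ha, hchain⟩ :=
        IsGreedyRun_s6.exists_inter_eq_greedyChain hs hloc hinj hrun hstep
      refine ⟨a, by omega, ha, fun i hi => ?_⟩
      rcases eq_or_lt_of_le (mem_Ico.1 hi).1 with rfl | hki
      · exact ⟨u, hu', by rwa [← hk, ← hloc L u hu]⟩
      · exact hchain i (mem_Ico.2 ⟨hki, (mem_Ico.1 hi).2⟩)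
    · exact IsGreedyRun_s6.exists_inter_eq_greedyChain hs hloc hinj hrun
        (by rwa [insert_inter_of_notMem hu])

theorem IsGreedyRun_s6.toFinset_inter_subset (hs : s ⊆ S)
    (hloc : ∀ L, ∀ v ∈ s, φ L v = φ (L ∩ s) v) (hinj : ∀ Q ⊆ s, Set.InjOn (φ Q) s)
    {us vs : List F} {α' β : ℝ} (hus : IsGreedyRun_s6 S φ α ∅ us) (hvs : IsGreedyRun_s6 S φ α' ∅ vs)
    (hstop : ∀ v ∈ S \ vs.toFinset, φ vs.toFinset v < β) (hβα : β ≤ α) :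
    us.toFinset ∩ s ⊆ vs.toFinset := by
  have hstart : (∅ : Finset F) ∩ s = greedyChain s φ 0 := empty_inter s
  obtain ⟨a, -, ha, hchain⟩ := hus.exists_inter_eq_greedyChain hs hloc hinj hstart
  obtain ⟨b, -, hb, -⟩ := hvs.exists_inter_eq_greedyChain hs hloc hinj hstart
  rw [empty_union] at ha hb
  rcases le_or_gt a b with hab | hba
  · exact ha ▸ (greedyChain_mono s φ hab).trans (hb ▸ inter_subset_left)
  · obtain ⟨u, hu, hαu⟩ := hchain b (mem_Ico.2 ⟨b.zero_le, hba⟩)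
    have hunot : u ∉ vs.toFinset := fun h =>
      (mem_sdiff.1 hu).2 (hb ▸ mem_inter.2 ⟨h, (mem_sdiff.1 hu).1⟩)
    have := hstop u (mem_sdiff.2 ⟨hs (mem_sdiff.1 hu).1, hunot⟩)
    rw [hloc _ u (mem_sdiff.1 hu).1, hb] at this
    exact absurd (this.trans_le hβα) hαu.not_gt

theorem IsGreedyRun_s6.toFinset_subset_of_blocks {ι : Type} [Fintype ι] {P : ι → Finset F}
    (hloc : ∀ c L, ∀ v ∈ P c, φ L v = φ (L ∩ P c) v)
    (hinj : ∀ c, ∀ Q ⊆ P c, Set.InjOn (φ Q) (P c))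
    {us vs : List F} {α' β : ℝ} (hus : IsGreedyRun_s6 (univ.biUnion P) φ α ∅ us)
    (hvs : IsGreedyRun_s6 (univ.biUnion P) φ α' ∅ vs)
    (hstop : ∀ v ∈ univ.biUnion P \ vs.toFinset, φ vs.toFinset v < β) (hβα : β ≤ α) :
    us.toFinset ⊆ vs.toFinset := by
  intro u hu
  obtain ⟨c, -, huc⟩ := mem_biUnion.1 (hus.toFinset_subset hu)
  exact hus.toFinset_inter_subset (subset_biUnion_of_mem P (mem_univ c)) (hloc c) (hinj c) hvs
    hstop hβα (mem_inter.2 ⟨hu, huc⟩)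

end Greedy

section Runs

variable {F X : Type} [DecidableEq F] [DecidableEq X]

theorem learnedAfter_zero (L0 : Finset F) (us : List F) : learnedAfter L0 us 0 = L0 := by
  simp [learnedAfter]

theorem learnedAfter_cons_succ (L0 : Finset F) (u : F) (us : List F) (i : ℕ) :
    learnedAfter L0 (u :: us) (i + 1) = learnedAfter (insert u L0) us i := by
  simp [learnedAfter, insert_union, union_insert]

theorem learnedAfter_length (L0 : Finset F) (us : List F) :
    learnedAfter L0 us us.length = L0 ∪ us.toFinset := by
  simp [learnedAfter]

theorem isGreedyRun_of_forall {S : Finset F} {φ : Finset F → F → ℝ} {α : ℝ} :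
    ∀ {L0 : Finset F} {us : List F}, (∀ i (h : i < us.length),
      us.get ⟨i, h⟩ ∈ S \ learnedAfter L0 us i ∧
      (∀ v ∈ S \ learnedAfter L0 us i,
        φ (learnedAfter L0 us i) v ≤ φ (learnedAfter L0 us i) (us.get ⟨i, h⟩)) ∧
      α ≤ φ (learnedAfter L0 us i) (us.get ⟨i, h⟩)) → IsGreedyRun_s6 S φ α L0 us
  | _, [], _ => trivial
  | L0, u :: us, h => by
    have hhead := h 0 (Nat.succ_pos _)
    simp only [learnedAfter_zero, List.get_eq_getElem, List.getElem_cons_zero] at hhead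
    refine ⟨hhead.1, hhead.2.1, hhead.2.2, isGreedyRun_of_forall fun i hi => ?_⟩
    simpa only [learnedAfter_cons_succ, List.get_eq_getElem, List.getElem_cons_succ] using
      h (i + 1) (by simpa using hi)

variable {S : Finset F} {feats : X → Finset F} {τ : ℕ} {γ : ℝ} {T M : Finset X}
  {L0 : Finset F} {us : List F}

theorem IsRun.isGreedyRun (h : IsRun S feats τ γ T M L0 us) :
    IsGreedyRun_s6 S (fun L => gval feats T (active feats τ L M T)) (γ / T.card) L0 us :=
  isGreedyRun_of_forall fun i hi => ⟨h.mem i hi, h.maximal i hi, h.threshold i hi⟩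

theorem IsRun.gval_lt (h : IsRun S feats τ γ T M L0 us) :
    ∀ u ∈ S \ (L0 ∪ us.toFinset),
      gval feats T (active feats τ (L0 ∪ us.toFinset) M T) u < γ / T.card := by
  simpa only [learnedAfter_length] using h.stopped

theorem IsRun.eq_nil (h : IsRun S feats τ γ T M L0 us)
    (hlt : ∀ u ∈ S \ L0, gval feats T (active feats τ L0 M T) u < γ / T.card) : us = [] := by
  refine List.eq_nil_iff_length_eq_zero.2 (Nat.eq_zero_of_not_pos fun hpos => ?_)
  have hmem := h.mem 0 hpos
  have hthr := h.threshold 0 hpos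
  rw [learnedAfter_zero] at hmem hthr
  exact (hlt _ hmem).not_ge hthr

theorem finalM_subset (hM : M ⊆ T) : finalM feats τ T M L0 us ⊆ T :=
  union_subset hM ((filter_subset _ _).trans sdiff_subset)

theorem le_card_inter_of_notMem_finalM {x : X} (hx : x ∈ T)
    (hxM : x ∉ finalM feats τ T M L0 us) : τ ≤ #(feats x ∩ (L0 ∪ us.toFinset)) := by
  simp only [finalM, active, mem_union, mem_filter, mem_sdiff, not_or, not_and, not_lt] at hxM
  exact hxM.2 ⟨hx, hxM.1⟩

end Runs

section Dataset

variable {F X : Type} [DecidableEq F]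

structure IsExpandingDataset {C : ℕ} (Sc : Fin C → Finset F) (label : X → Fin C)
    (feats : X → Finset F) (nA : Fin C → Finset F → ℕ) (n : ℕ) (chunk : ℕ → Finset X) :
    Prop where
  feats_subset : ∀ x, feats x ⊆ Sc (label x)
  disjoint_chunk : ∀ j j', j ≠ j' → Disjoint (chunk j) (chunk j')
  card_chunk : ∀ j, 1 ≤ j → #(chunk j) = n
  card_filter_chunk : ∀ j, 1 ≤ j → ∀ c, ∀ A ∈ (Sc c).powerset,
    #((chunk j).filter fun x => label x = c ∧ feats x = A) = nA c A

theorem hval_eq_div {C : ℕ} (Sc : Fin C → Finset F) (nA : Fin C → Finset F → ℕ)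
    (τ n : ℕ) (v : F) (L : Finset F) :
    hval C Sc nA τ n v L = ((∑ c, ∑ A ∈ (Sc c).powerset,
      if #(A ∩ L) < τ ∧ v ∈ A then nA c A else 0 : ℕ) : ℝ) / n := by
  simp only [hval, Nat.cast_sum, Nat.cast_ite, Nat.cast_zero, mul_ite, mul_one, mul_zero,
    and_comm]
  ring

theorem hval_inter_of_mem {C : ℕ} {Sc : Fin C → Finset F} (nA : Fin C → Finset F → ℕ)
    (τ n : ℕ) (hdisj : ∀ c c', c ≠ c' → Disjoint (Sc c) (Sc c')) (c : Fin C) (L : Finset F) :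
    ∀ v ∈ Sc c, hval C Sc nA τ n v L = hval C Sc nA τ n v (L ∩ Sc c) := by
  intro v hv
  unfold hval
  congr 1
  refine sum_congr rfl fun c' _ => sum_congr rfl fun A hA => ?_
  by_cases hvA : v ∈ A
  · obtain rfl : c' = c := by
      by_contra hne
      exact disjoint_left.1 (hdisj c' c hne) (mem_powerset.1 hA hvA) hv
    rw [← inter_assoc, inter_right_comm, inter_eq_left.2 (mem_powerset.1 hA)]
  · simp [hvA]

theorem ACC_monotone {C : ℕ} (Sc : Fin C → Finset F) (nA : Fin C → Finset F → ℕ) (τ n : ℕ) :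
    Monotone (ACC C Sc nA τ n) := by
  intro L L' hLL'
  have hC : (0 : ℝ) ≤ ((C : ℝ) - 1) / C := by
    rcases C with _ | C
    · simp
    · exact div_nonneg (by simp) (by positivity)
  refine sub_le_sub_left (mul_le_mul_of_nonneg_left (mul_le_mul_of_nonneg_left
    (sum_le_sum fun c _ => sum_le_sum fun A _ => ?_) (by positivity)) hC) 1
  refine mul_le_mul_of_nonneg_left ?_ (Nat.cast_nonneg _)
  split_ifs with h h' <;> norm_num
  exact h' ((card_le_card (inter_subset_inter_left hLL')).trans_lt h)

theorem IsExpandingDataset.card_filter_chunk_feats {C n : ℕ} {Sc : Fin C → Finset F}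
    {label : X → Fin C} {feats : X → Finset F} {nA : Fin C → Finset F → ℕ}
    {chunk : ℕ → Finset X} (hD : IsExpandingDataset Sc label feats nA n chunk) {j : ℕ}
    (hj : 1 ≤ j) (P : Finset F → Prop) [DecidablePred P] :
    #((chunk j).filter fun x => P (feats x)) =
      ∑ c, ∑ A ∈ (Sc c).powerset, if P A then nA c A else 0 := by
  rw [card_eq_sum_card_fiberwise (f := label) (t := univ) fun _ _ => mem_coe.2 (mem_univ _)]
  refine sum_congr rfl fun c _ => ?_
  rw [card_eq_sum_card_fiberwise (f := feats) (t := (Sc c).powerset) fun x hx => by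
    simpa [(mem_filter.1 hx).2] using hD.feats_subset x]
  refine sum_congr rfl fun A hA => ?_
  simp only [filter_filter]
  split_ifs with hP
  · rw [← hD.card_filter_chunk j hj c A hA]
    congr 1
    exact filter_congr fun x _ => by constructor <;> rintro ⟨_, _⟩ <;> simp_all
  · exact card_eq_zero.2 (filter_eq_empty_iff.2 fun x _ ⟨⟨hx, _⟩, hA⟩ => hP (hA ▸ hx))

variable [DecidableEq X]

theorem mem_cumT_succ {chunk : ℕ → Finset X} {j : ℕ} {x : X} :
    x ∈ cumT chunk (j + 1) ↔ x ∈ cumT chunk j ∨ x ∈ chunk (j + 1) := by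
  simp only [cumT, mem_biUnion, mem_Icc]
  constructor
  · rintro ⟨l, ⟨hl1, hl2⟩, hx⟩
    rcases eq_or_lt_of_le hl2 with rfl | hlt
    · exact Or.inr hx
    · exact Or.inl ⟨l, ⟨hl1, by omega⟩, hx⟩
  · rintro (⟨l, ⟨hl1, hl2⟩, hx⟩ | hx)
    · exact ⟨l, ⟨hl1, by omega⟩, hx⟩
    · exact ⟨j + 1, ⟨by omega, le_rfl⟩, hx⟩

theorem cumT_subset_cumT_succ (chunk : ℕ → Finset X) (j : ℕ) :
    cumT chunk j ⊆ cumT chunk (j + 1) :=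
  fun _ hx => mem_cumT_succ.2 (Or.inl hx)

theorem disjoint_cumT_chunk_succ {chunk : ℕ → Finset X}
    (hdisj : ∀ j j', j ≠ j' → Disjoint (chunk j) (chunk j')) (j : ℕ) :
    Disjoint (cumT chunk j) (chunk (j + 1)) :=
  (disjoint_biUnion_left _ _ _).2 fun l hl => hdisj l (j + 1) (by simp at hl; omega)

theorem card_filter_cumT_s6 {chunk : ℕ → Finset X}
    (hdisj : ∀ j j', j ≠ j' → Disjoint (chunk j) (chunk j'))
    (p : X → Prop) [DecidablePred p] {m : ℕ} (hm : ∀ l, 1 ≤ l → #((chunk l).filter p) = m)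
    (j : ℕ) : #((cumT chunk j).filter p) = j * m := by
  rw [cumT, filter_biUnion, card_biUnion fun a _ b _ hab =>
    (hdisj a b hab).mono (filter_subset p _) (filter_subset p _)]
  rw [sum_congr rfl fun l hl => hm l (mem_Icc.1 hl).1]
  simp

theorem active_cumT_succ {feats : X → Finset F} {τ : ℕ} {chunk : ℕ → Finset X}
    (hdisj : ∀ j j', j ≠ j' → Disjoint (chunk j) (chunk j')) {L : Finset F} {M : Finset X}
    {j : ℕ} (hM : M ⊆ cumT chunk j) (hwell : ∀ x ∈ cumT chunk j \ M, τ ≤ #(feats x ∩ L)) :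
    active feats τ L M (cumT chunk (j + 1)) =
      (chunk (j + 1)).filter fun x => #(feats x ∩ L) < τ := by
  ext x
  simp only [active, mem_filter, mem_sdiff, mem_cumT_succ, and_congr_left_iff]
  intro hx
  constructor
  · rintro ⟨hxT | hxT, hxM⟩
    exacts [absurd hx (hwell x (mem_sdiff.2 ⟨hxT, hxM⟩)).not_gt, hxT]
  · exact fun hxT => ⟨Or.inr hxT, fun hxM =>
      disjoint_left.1 (disjoint_cumT_chunk_succ hdisj j) (hM hxM) hxT⟩

theorem warm_start_invariant {feats : X → Finset F} {τ : ℕ} {chunk : ℕ → Finset X}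
    {Lw : ℕ → Finset F} {Mw : ℕ → Finset X} {usw : ℕ → List F} (hMw0 : Mw 0 = ∅)
    (hL : ∀ j, Lw (j + 1) = Lw j ∪ (usw (j + 1)).toFinset)
    (hM : ∀ j, Mw (j + 1) = finalM feats τ (cumT chunk (j + 1)) (Mw j) (Lw j) (usw (j + 1)))
    (j : ℕ) : Mw j ⊆ cumT chunk j ∧ ∀ x ∈ cumT chunk j \ Mw j, τ ≤ #(feats x ∩ Lw j) := by
  induction j with
  | zero => simp [hMw0, cumT]
  | succ j ih =>
    refine ⟨hM j ▸ finalM_subset (ih.1.trans (cumT_subset_cumT_succ chunk j)), fun x hx => ?_⟩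
    rw [mem_sdiff, hM j] at hx
    exact hL j ▸ le_card_inter_of_notMem_finalM hx.1 hx.2

namespace IsExpandingDataset

variable {C n : ℕ} {Sc : Fin C → Finset F} {label : X → Fin C} {feats : X → Finset F}
  {nA : Fin C → Finset F → ℕ} {chunk : ℕ → Finset X}

theorem card_cumT (hD : IsExpandingDataset Sc label feats nA n chunk) (j : ℕ) :
    #(cumT chunk j) = j * n := by
  simpa using card_filter_cumT_s6 hD.disjoint_chunk (fun _ => True)
    (fun l hl => by simpa using hD.card_chunk l hl) j

variable {τ : ℕ}

theorem gval_active_empty_cumT (hD : IsExpandingDataset Sc label feats nA n chunk) {j : ℕ}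
    (hj : 1 ≤ j) (L : Finset F) (v : F) :
    gval feats (cumT chunk j) (active feats τ L ∅ (cumT chunk j)) v = hval C Sc nA τ n v L := by
  rw [gval, featCount, active, sdiff_empty, filter_filter,
    card_filter_cumT_s6 hD.disjoint_chunk _ (fun l hl => hD.card_filter_chunk_feats hl
      (fun A => #(A ∩ L) < τ ∧ v ∈ A)) j, hD.card_cumT, hval_eq_div]
  push_cast
  exact mul_div_mul_left _ _ (by exact_mod_cast (by omega : j ≠ 0))

theorem gval_active_cumT_succ (hD : IsExpandingDataset Sc label feats nA n chunk)
    {L : Finset F} {M : Finset X} {j : ℕ} (hM : M ⊆ cumT chunk j)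
    (hwell : ∀ x ∈ cumT chunk j \ M, τ ≤ #(feats x ∩ L)) (v : F) :
    gval feats (cumT chunk (j + 1)) (active feats τ L M (cumT chunk (j + 1))) v =
      hval C Sc nA τ n v L / (j + 1) := by
  rw [gval, featCount, active_cumT_succ hD.disjoint_chunk hM hwell, filter_filter,
    hD.card_filter_chunk_feats (Nat.le_add_left 1 j) (fun A => #(A ∩ L) < τ ∧ v ∈ A),
    hD.card_cumT, hval_eq_div]
  push_cast
  rw [div_div, mul_comm]

theorem isGreedyRun_hval_of_isRun (hD : IsExpandingDataset Sc label feats nA n chunk) {S : Finset F}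
    {γ : ℝ} {j : ℕ} (hj : 1 ≤ j) {us : List F} (hrun : IsRun S feats τ γ (cumT chunk j) ∅ ∅ us) :
    IsGreedyRun_s6 S (fun L v => hval C Sc nA τ n v L) (γ / (j * n)) ∅ us ∧
      ∀ v ∈ S \ us.toFinset, hval C Sc nA τ n v us.toFinset < γ / (j * n) := by
  have hφ : (fun L => gval feats (cumT chunk j) (active feats τ L ∅ (cumT chunk j))) =
      fun L v => hval C Sc nA τ n v L :=
    funext₂ (hD.gval_active_empty_cumT hj)
  have hcard : (#(cumT chunk j) : ℝ) = j * n := by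
    rw [hD.card_cumT]
    push_cast
    rfl
  refine ⟨hφ ▸ hcard ▸ hrun.isGreedyRun, fun v hv => ?_⟩
  simpa [hD.gval_active_empty_cumT hj, hcard] using hrun.gval_lt v (by simpa using hv)

theorem warm_learned_eq_first (hD : IsExpandingDataset Sc label feats nA n chunk)
    {S : Finset F} {γ : ℝ} {Lw : ℕ → Finset F} {Mw : ℕ → Finset X} {usw : ℕ → List F}
    (hMw0 : Mw 0 = ∅)
    (hrun : ∀ j, IsRun S feats τ γ (cumT chunk (j + 1)) (Mw j) (Lw j) (usw (j + 1)))
    (hL : ∀ j, Lw (j + 1) = Lw j ∪ (usw (j + 1)).toFinset)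
    (hM : ∀ j, Mw (j + 1) = finalM feats τ (cumT chunk (j + 1)) (Mw j) (Lw j) (usw (j + 1)))
    (hstop : ∀ v ∈ S \ Lw 1, hval C Sc nA τ n v (Lw 1) < γ / n) :
    ∀ j, 1 ≤ j → Lw j = Lw 1 := by
  intro j hj
  induction j, hj using Nat.le_induction with
  | base => rfl
  | succ j _ ih =>
    obtain ⟨hMsub, hwell⟩ := warm_start_invariant hMw0 hL hM j
    have hnil : usw (j + 1) = [] := (hrun j).eq_nil fun u hu => by
      rw [hD.gval_active_cumT_succ hMsub hwell, hD.card_cumT, ih]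
      rw [ih] at hu
      calc hval C Sc nA τ n u (Lw 1) / (j + 1) < γ / n / (j + 1) :=
            div_lt_div_of_pos_right (hstop u hu) (by positivity)
        _ = γ / ((j + 1 : ℕ) * n : ℕ) := by push_cast; rw [div_div, mul_comm]
    rw [hL j, hnil, List.toFinset_nil, union_empty, ih]

end IsExpandingDataset

end Dataset

theorem warm_acc_le_cold_acc_general
    {F X : Type} [DecidableEq F] [DecidableEq X]
    (C τ : ℕ) (γ : ℝ) (n : ℕ)
    (Sc : Fin C → Finset F) (label : X → Fin C) (feats : X → Finset F)
    (nA : Fin C → Finset F → ℕ) (chunk : ℕ → Finset X)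
    (hγ : 0 < γ)
    (hdisjS : ∀ c c', c ≠ c' → Disjoint (Sc c) (Sc c'))
    (hfeats : ∀ x, feats x ⊆ Sc (label x))
    (hchunkdisj : ∀ j j', j ≠ j' → Disjoint (chunk j) (chunk j'))
    (hchunkcard : ∀ j, 1 ≤ j → (chunk j).card = n)
    (hcount : ∀ j, 1 ≤ j → ∀ c : Fin C, ∀ A ∈ (Sc c).powerset,
      ((chunk j).filter fun x => label x = c ∧ feats x = A).card = nA c A)
    (hinj : ∀ L : Finset F, L ⊆ Finset.univ.biUnion Sc →
      ∀ c : Fin C, ∀ v₁ ∈ Sc c, ∀ v₂ ∈ Sc c,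
        hval C Sc nA τ n v₁ L = hval C Sc nA τ n v₂ L → v₁ = v₂)
    (Lw : ℕ → Finset F) (Mw : ℕ → Finset X) (usw : ℕ → List F)
    (hLw0 : Lw 0 = ∅) (hMw0 : Mw 0 = ∅)
    (hwarm : ∀ j : ℕ,
      IsRun (Finset.univ.biUnion Sc) feats τ γ (cumT chunk (j + 1)) (Mw j) (Lw j)
        (usw (j + 1)) ∧
      Lw (j + 1) = Lw j ∪ (usw (j + 1)).toFinset ∧
      Mw (j + 1) = finalM feats τ (cumT chunk (j + 1)) (Mw j) (Lw j) (usw (j + 1)))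
    (usc : ℕ → List F)
    (hcold : ∀ j : ℕ,
      IsRun (Finset.univ.biUnion Sc) feats τ γ (cumT chunk (j + 1)) ∅ ∅ (usc (j + 1)))
 :
    ∀ J : ℕ, 2 ≤ J →
      ACC C Sc nA τ n (Lw J) ≤ ACC C Sc nA τ n ((usc J).toFinset) := by
  intro J hJ
  have hD : IsExpandingDataset Sc label feats nA n chunk :=
    ⟨hfeats, hchunkdisj, hchunkcard, hcount⟩
  have hLw1 : Lw 1 = (usw 1).toFinset := by simpa [hLw0] using (hwarm 0).2.1
  obtain ⟨hgreedy1, hstop1⟩ :=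
    hD.isGreedyRun_hval_of_isRun le_rfl (by simpa [hLw0, hMw0] using (hwarm 0).1)
  obtain ⟨hgreedyJ, hstopJ⟩ :=
    hD.isGreedyRun_hval_of_isRun (by omega) (Nat.sub_add_cancel (by omega : 1 ≤ J) ▸ hcold (J - 1))
  have hthreshold : γ / (J * n) ≤ γ / ((1 : ℕ) * n) := by
    rw [Nat.cast_one, one_mul, mul_comm, ← div_div]
    exact div_le_self (div_nonneg hγ.le n.cast_nonneg) (by exact_mod_cast (by omega : 1 ≤ J))
  have hsub : (usw 1).toFinset ⊆ (usc J).toFinset :=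
    hgreedy1.toFinset_subset_of_blocks (hval_inter_of_mem nA τ n hdisjS)
      (fun c Q hQ v₁ hv₁ v₂ hv₂ => hinj Q (hQ.trans (subset_biUnion_of_mem Sc (mem_univ c))) c
        v₁ hv₁ v₂ hv₂)
      hgreedyJ hstopJ hthreshold
  have hLwJ : Lw J = Lw 1 :=
    hD.warm_learned_eq_first hMw0 (fun j => (hwarm j).1) (fun j => (hwarm j).2.1)
      (fun j => (hwarm j).2.2) (by simpa [hLw1, one_mul] using hstop1) J (by omega)
  rw [hLwJ, hLw1]
  exact ACC_monotone Sc nA τ n hsub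

/-- Theorem 3.4, accuracy part: for every `J ≥ 2` the test
accuracy of the warm-started model is at most that of the cold-started model:
`ACC(L_warm^(J)) ≤ ACC(L_cold^(J))`. -/
theorem warm_acc_le_cold_acc
    {F X : Type} [DecidableEq F] [DecidableEq X]
    (C K τ : ℕ) (γ : ℝ) (n : ℕ)
    (Sc : Fin C → Finset F) (label : X → Fin C) (feats : X → Finset F)
    (nA : Fin C → Finset F → ℕ) (chunk : ℕ → Finset X)
    (hγ : 0 < γ) (hτK : τ < K)
    (hK : ∀ c, (Sc c).card = K)
    (hdisjS : ∀ c c', c ≠ c' → Disjoint (Sc c) (Sc c'))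
    (hfeats : ∀ x, feats x ⊆ Sc (label x))
    (hnA : ∀ c, ∀ A ∈ (Sc c).powerset, 1 ≤ nA c A)
    (hn : n = ∑ c : Fin C, ∑ A ∈ (Sc c).powerset, nA c A)
    (hchunkdisj : ∀ j j', j ≠ j' → Disjoint (chunk j) (chunk j'))
    (hchunkcard : ∀ j, 1 ≤ j → (chunk j).card = n)
    (hcount : ∀ j, 1 ≤ j → ∀ c : Fin C, ∀ A ∈ (Sc c).powerset,
      ((chunk j).filter fun x => label x = c ∧ feats x = A).card = nA c A)
    (hC : 0 < C) (hτpos : 0 < τ)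
    (hinj : ∀ L : Finset F, L ⊆ Finset.univ.biUnion Sc →
      ∀ c : Fin C, ∀ v₁ ∈ Sc c, ∀ v₂ ∈ Sc c,
        hval C Sc nA τ n v₁ L = hval C Sc nA τ n v₂ L → v₁ = v₂)
    (hii : ∀ c : Fin C, ∃ v : Fin τ → F, Function.Injective v ∧ (∀ i, v i ∈ Sc c) ∧
      ∀ j, 1 ≤ j →
        ((∀ i : Fin τ, (i : ℕ) + 1 < τ →
            γ / (n : ℝ) ≤ gval feats (chunk j) (chunk j) (v i)) ∧
          gval feats (chunk j) (chunk j)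
            (v ⟨τ - 1, Nat.sub_lt hτpos Nat.one_pos⟩) < γ / (n : ℝ)))
    (Lw : ℕ → Finset F) (Mw : ℕ → Finset X) (usw : ℕ → List F)
    (hLw0 : Lw 0 = ∅) (hMw0 : Mw 0 = ∅)
    (hwarm : ∀ j : ℕ,
      IsRun (Finset.univ.biUnion Sc) feats τ γ (cumT chunk (j + 1)) (Mw j) (Lw j)
        (usw (j + 1)) ∧
      Lw (j + 1) = Lw j ∪ (usw (j + 1)).toFinset ∧
      Mw (j + 1) = finalM feats τ (cumT chunk (j + 1)) (Mw j) (Lw j) (usw (j + 1)))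
    (usc : ℕ → List F)
    (hcold : ∀ j : ℕ,
      IsRun (Finset.univ.biUnion Sc) feats τ γ (cumT chunk (j + 1)) ∅ ∅ (usc (j + 1)))
 :
    ∀ J : ℕ, 2 ≤ J →
      ACC C Sc nA τ n (Lw J) ≤ ACC C Sc nA τ n ((usc J).toFinset) :=
  warm_acc_le_cold_acc_general C τ γ n Sc label feats nA chunk hγ hdisjS hfeats hchunkdisj
    hchunkcard hcount hinj Lw Mw usw hLw0 hMw0 hwarm usc hcold
end
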